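/- arXiv:2103.11992 — 2 statements merged into one kernel-verified Lean document; each statement's English description precedes it below -/
import Mathlib

section
/- A countably infinite simple graph is isomorphic to the Rado graph R if and only if it satisfies property ⋆: for every two disjoint finite sets of vertices U and W, there exists a vertex z adjacent to every vertex of U and to no vertex of W. -/
/-!
Property ⋆ is invariant under isomorphism, and the Rado graph has it: given disjoint finite
`U, W ⊆ ℕ`, the number whose binary expansion has its ones exactly at `U ∪ {N}`, with `N` beyond
`U ∪ W`, is a witness. Conversely, ⋆ lets a fresh vertex realize any adjacency pattern over a
finite set of vertices, so every finite partial isomorphism between two graphs with ⋆ extends to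
any further vertex; for countable graphs the back-and-forth argument then produces an isomorphism.
-/

def Rado : SimpleGraph ℕ :=
  SimpleGraph.fromRel (fun i j => i < j ∧ Nat.testBit j i)

open FirstOrder Language Structure

namespace FirstOrder.Language

theorem Substructure.mem_closure_singleton_sup_iff {L : Language} [L.IsRelational] {M : Type*}
    [L.Structure M] {S : L.Substructure M} {m x : M} :
    x ∈ Substructure.closure L {m} ⊔ S ↔ x = m ∨ x ∈ S := by
  rw [← Substructure.closure_eq S, ← Substructure.closure_union,
    Substructure.mem_closure_iff_of_isRelational, Substructure.closure_eq]
  rfl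

instance : IsEmpty (Language.graph.Relations 0) := ⟨nofun⟩

variable {M N : Type*} [Language.graph.Structure M] [Language.graph.Structure N]

def Embedding.ofAdjIff (f : M → N) (hf : Function.Injective f)
    (hadj : ∀ a b, RelMap adj ![f a, f b] ↔ RelMap adj ![a, b]) : M ↪[Language.graph] N where
  toFun := f
  inj' := hf
  map_rel' := by
    rintro _ ⟨⟩ x
    convert hadj (x 0) (x 1) using 2 <;> ext i <;> fin_cases i <;> rfl

end FirstOrder.Language

namespace SimpleGraph

variable {V V' : Type*}

/-- Property ⋆. -/
def HasExtensionProperty (G : SimpleGraph V) : Prop :=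
  ∀ U W : Finset V, Disjoint U W → ∃ z, (∀ u ∈ U, G.Adj z u) ∧ ∀ w ∈ W, ¬ G.Adj z w

theorem HasExtensionProperty.of_iso {G : SimpleGraph V} {H : SimpleGraph V'} (e : G ≃g H)
    (hH : H.HasExtensionProperty) : G.HasExtensionProperty := by
  intro U W hUW
  obtain ⟨z, hzU, hzW⟩ := hH (U.map e.toEquiv.toEmbedding) (W.map e.toEquiv.toEmbedding)
    (Finset.disjoint_map _ |>.2 hUW)
  refine ⟨e.symm z, fun u hu => ?_, fun w hw hadj => ?_⟩
  · simpa using e.symm.map_adj_iff.2 (hzU (e u) (Finset.mem_map_of_mem _ hu))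
  · exact hzW (e w) (Finset.mem_map_of_mem _ hw) (by simpa using e.map_adj_iff.2 hadj)

theorem HasExtensionProperty.exists_fresh_adj_iff {G : SimpleGraph V}
    (hG : G.HasExtensionProperty) {ι : Type*} [Finite ι] {f : ι → V} (hf : Function.Injective f)
    (p : ι → Prop) : ∃ z, z ∉ Set.range f ∧ ∀ i, G.Adj z (f i) ↔ p i := by
  classical
  have := Fintype.ofFinite ι
  -- `y` is adjacent to every `f i`, so a vertex not adjacent to `y` lies off the range of `f`.
  obtain ⟨y, hy, -⟩ := hG (Finset.univ.image f) ∅ (Finset.disjoint_empty_right _)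
  have hyf : ∀ i, G.Adj y (f i) := fun i => hy _ (Finset.mem_image_of_mem _ (Finset.mem_univ i))
  obtain ⟨z, hzU, hzW⟩ := hG ((Finset.univ.filter p).image f)
    (insert y ((Finset.univ.filter (¬ p ·)).image f)) <| by
      simp only [Finset.disjoint_insert_right, Finset.mem_image, Finset.mem_filter, not_exists,
        not_and]
      exact ⟨fun i _ hi => (hyf i).ne hi.symm,
        Finset.disjoint_image hf |>.2 (Finset.disjoint_filter_filter_not _ _ _)⟩
  refine ⟨z, ?_, fun i => ⟨fun hadj => ?_, fun hi => hzU _ (by simpa using ⟨i, hi, rfl⟩)⟩⟩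
  · rintro ⟨i, rfl⟩
    exact hzW y (Finset.mem_insert_self _ _) (hyf i).symm
  · by_contra hi
    exact hzW _ (Finset.mem_insert_of_mem (by simpa using ⟨i, hi, rfl⟩)) hadj

theorem HasExtensionProperty.isExtensionPair (G : SimpleGraph V) {H : SimpleGraph V'}
    (hH : H.HasExtensionProperty) :
    @IsExtensionPair Language.graph V V' G.structure H.structure := by
  classical
  let := G.structure
  let := H.structure
  rw [isExtensionPair_iff_exists_embedding_closure_singleton_sup]
  intro S hS f m
  have : Finite S := (S.fg_iff_structure_fg.1 hS).finite
  obtain ⟨z, hz_fresh, hz⟩ := hH.exists_fresh_adj_iff f.injective (G.Adj m ·)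
  set T := Substructure.closure Language.graph {m} ⊔ S
  have hT : ∀ x : T, (x : V) ∉ S → (x : V) = m :=
    fun x hxS => (Substructure.mem_closure_singleton_sup_iff.1 x.2).resolve_right hxS
  let g : T → V' := fun x => if hx : (x : V) ∈ S then f ⟨x, hx⟩ else z
  have hg_adj : ∀ a b : T, (a : V) ∈ S → (b : V) ∉ S → (H.Adj (g a) (g b) ↔ G.Adj a b) := by
    intro a b ha hb
    simp only [g, dif_pos ha, dif_neg hb, hT b hb, H.adj_comm _ z, G.adj_comm _ m]
    exact hz _
  refine ⟨Embedding.ofAdjIff g ?_ ?_, ?_⟩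
  · intro a b hab
    by_cases ha : (a : V) ∈ S <;> by_cases hb : (b : V) ∈ S <;>
      simp only [g, ha, hb, dif_pos] at hab
    · exact Subtype.ext (congrArg (Subtype.val : S → V) (f.injective hab))
    · exact absurd ⟨_, hab⟩ hz_fresh
    · exact absurd ⟨_, hab.symm⟩ hz_fresh
    · exact Subtype.ext ((hT a ha).trans (hT b hb).symm)
  · intro a b
    show H.Adj (g a) (g b) ↔ G.Adj a b
    by_cases ha : (a : V) ∈ S <;> by_cases hb : (b : V) ∈ S
    · simp only [g, dif_pos ha, dif_pos hb]
      exact f.map_rel adj ![⟨a, ha⟩, ⟨b, hb⟩]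
    · exact hg_adj a b ha hb
    · rw [H.adj_comm, G.adj_comm]
      exact hg_adj b a hb ha
    · simp only [g, dif_neg ha, dif_neg hb, hT a ha, hT b hb, SimpleGraph.irrefl]
  · ext ⟨x, hx⟩
    show f ⟨x, hx⟩ = g ⟨x, _⟩
    simp only [g, dif_pos hx]

theorem HasExtensionProperty.nonempty_iso [Countable V] [Countable V'] {G : SimpleGraph V}
    {H : SimpleGraph V'} (hG : G.HasExtensionProperty) (hH : H.HasExtensionProperty) :
    Nonempty (G ≃g H) := by
  let := G.structure
  let := H.structure
  obtain ⟨e, -⟩ := equiv_between_cg cg_of_countable cg_of_countable default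
    (hH.isExtensionPair G) (hG.isExtensionPair H)
  exact ⟨⟨e.toEquiv, fun {a b} => e.map_rel adj ![a, b]⟩⟩

end SimpleGraph

theorem Nat.testBit_sum_two_pow (s : Finset ℕ) (k : ℕ) :
    (∑ i ∈ s, 2 ^ i).testBit k ↔ k ∈ s := by
  rw [← Nat.mem_bitIndices, ← List.mem_toFinset, Finset.toFinset_bitIndices_sum_two_pow]

theorem rado_adj_iff_testBit {i j : ℕ} (h : i < j) : Rado.Adj j i ↔ j.testBit i := by
  simp [Rado, h, h.ne', h.not_gt]

theorem rado_hasExtensionProperty : Rado.HasExtensionProperty := by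
  intro U W hUW
  set N := (U ∪ W).sup id + 1
  have hN : ∀ x ∈ U ∪ W, x < N := fun x hx => Nat.lt_succ_of_le (Finset.le_sup (f := id) hx)
  set z := ∑ i ∈ insert N U, 2 ^ i
  have hz : ∀ x ∈ U ∪ W, Rado.Adj z x ↔ x ∈ U := by
    intro x hx
    have hxz : x < z :=
      (hN x hx).trans (Finset.lt_geomSum_of_mem le_rfl (Finset.mem_insert_self _ _))
    rw [rado_adj_iff_testBit hxz, Nat.testBit_sum_two_pow, Finset.mem_insert,
      or_iff_right (hN x hx).ne]
  refine ⟨z, fun u hu => (hz u (Finset.mem_union_left _ hu)).2 hu, fun w hw => ?_⟩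
  rw [hz w (Finset.mem_union_right _ hw)]
  exact Finset.disjoint_right.1 hUW hw

theorem stmt_2_general {V : Type*} [Countable V] (G : SimpleGraph V) :
    Nonempty (G ≃g Rado) ↔
      ∀ U W : Finset V, Disjoint U W →
        ∃ z : V, (∀ u ∈ U, G.Adj z u) ∧ ∀ w ∈ W, ¬ G.Adj z w :=
  ⟨fun ⟨e⟩ => rado_hasExtensionProperty.of_iso e,
    fun hG => SimpleGraph.HasExtensionProperty.nonempty_iso hG rado_hasExtensionProperty⟩

/-- a countably infinite simple graph is isomorphic to the Rado graph
iff it satisfies property ⋆: for every two disjoint finite sets of vertices `U` and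
`W` there is a vertex `z` adjacent to every vertex of `U` and to no vertex of `W`. -/
theorem stmt_2 {V : Type*} [Countable V] [Infinite V] (G : SimpleGraph V) :
    Nonempty (G ≃g Rado) ↔
      ∀ U W : Finset V, Disjoint U W →
        ∃ z : V, (∀ u ∈ U, G.Adj z u) ∧ ∀ w ∈ W, ¬ G.Adj z w :=
  stmt_2_general G
end

section
/- Assume the Generalized Continuum Hypothesis (for every infinite cardinal κ there is no cardinal strictly between κ and 2^κ). Let ℵ be an infinite cardinal, let R_ℵ be a graph of order ℵ satisfying property ⋆_ℵ, and let F be a family of graphs of order ℵ with |F| = ℵ. Then FP(F, R_ℵ) has a solution if and only if the domination number of each graph in F equals ℵ. -/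
universe u

/-- Property `⋆_ℵ`: for every two disjoint sets of vertices `U` and `W`, each of
cardinality less than `ℵ`, there is a vertex `z` adjacent to every vertex of `U`
and to no vertex of `W`. -/
def StarProp {V : Type u} (ℵ : Cardinal.{u}) (G : SimpleGraph V) : Prop :=
  ∀ U W : Set V, Disjoint U W → Cardinal.mk ↥U < ℵ → Cardinal.mk ↥W < ℵ →
    ∃ z : V, (∀ u ∈ U, G.Adj z u) ∧ ∀ w ∈ W, ¬ G.Adj z w

/-- A set `D` of vertices is dominating if every vertex not in `D` is adjacent to
some vertex of `D`. -/
def IsDominatingSet {V : Type*} (F : SimpleGraph V) (D : Set V) : Prop :=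
  ∀ v ∉ D, ∃ d ∈ D, F.Adj v d

/-- An indexed family `G` of graphs is a factorization of `Λ`: each `G a` is a
(spanning) subgraph of `Λ` and the edge sets of the `G a` partition the edge set
of `Λ`. -/
def IsFactorization {A V : Type*} (Λ : SimpleGraph V) (G : A → SimpleGraph V) : Prop :=
  (∀ a, G a ≤ Λ) ∧ ∀ e ∈ Λ.edgeSet, ∃! a, e ∈ (G a).edgeSet

/-!
If `F a` had a dominating set `D` with `|D| < ℵ`, property `⋆_ℵ` would give a vertex of `Rℵ`
outside the image of `D` with no neighbour in it, so no copy of `F a` inside `Rℵ` is spanning.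

Conversely, build the factorization by a back-and-forth of length `ℵ`: keep edge-disjoint
partial copies of all the `F a` inside `Rℵ` and meet, one at a time, the `ℵ` requirements
"vertex `u` of `F a` has an image", "vertex `x` of `Rℵ` has a preimage in `F a`" and "the edge
`xy` of `Rℵ` is covered". An image is found by `⋆_ℵ`, applied to the images of the neighbours
of `u`; a preimage is a vertex of `F a` that is neither in nor adjacent to the current domain,
which exists because that domain is too small to dominate `F a`; an uncovered edge is covered
by an edge of a factor that has not been used yet.
-/

open Cardinal Set SimpleGraph

namespace StarProp

variable {X : Type u} {ℵ : Cardinal.{u}} {R : SimpleGraph X}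

theorem exists_adj_not_adj_not_mem (hℵ : ℵ₀ ≤ ℵ) (hR : StarProp ℵ R) {U W B : Set X}
    (hUW : Disjoint U W) (hU : #U < ℵ) (hW : #W < ℵ) (hB : #B < ℵ) :
    ∃ z ∉ B, (∀ u ∈ U, R.Adj z u) ∧ ∀ w ∈ W, ¬ R.Adj z w := by
  -- `q` is adjacent to every vertex of `B`, so a witness that is not adjacent to `q` avoids `B`
  obtain ⟨q, hq, -⟩ := hR (B ∪ U) ∅ disjoint_bot_right
    ((mk_union_le B U).trans_lt (add_lt_of_lt hℵ hB hU))
    ((mk_eq_zero _).trans_lt (aleph0_pos.trans_le hℵ))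
  have hqU : q ∉ U := fun h => (hq q (Or.inr h)).ne rfl
  obtain ⟨z, hzU, hzW⟩ := hR U (insert q W) (disjoint_insert_right.2 ⟨hqU, hUW⟩) hU
    (mk_insert_le.trans_lt (add_lt_of_lt hℵ hW (one_lt_aleph0.trans_le hℵ)))
  exact ⟨z, fun hzB => hzW q (mem_insert q W) (hq z (Or.inl hzB)).symm, hzU,
    fun w hw => hzW w (mem_insert_of_mem q hw)⟩

theorem le_mk_of_isDominatingSet (hℵ : ℵ₀ ≤ ℵ) (hR : StarProp ℵ R) {G : SimpleGraph X}
    (hG : G ≤ R) {D : Set X} (hD : IsDominatingSet G D) : ℵ ≤ #D := by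
  by_contra! hD_small
  obtain ⟨z, hzD, -, hz⟩ := hR.exists_adj_not_adj_not_mem hℵ (U := ∅) disjoint_bot_left
    ((mk_eq_zero _).trans_lt (aleph0_pos.trans_le hℵ)) hD_small hD_small
  obtain ⟨d, hd, hzd⟩ := hD z hzD
  exact hz d hd (hG hzd)

end StarProp

theorem IsDominatingSet.image_iso {V W : Type*} {F : SimpleGraph V} {G : SimpleGraph W}
    (e : F ≃g G) {D : Set V} (hD : IsDominatingSet F D) : IsDominatingSet G (e '' D) := by
  intro w hw
  obtain ⟨d, hd, hadj⟩ := hD (e.symm w) fun h => hw ⟨_, h, e.apply_symm_apply w⟩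
  exact ⟨e d, mem_image_of_mem e hd, by simpa using e.map_adj_iff.2 hadj⟩

theorem exists_forall_of_small_extensions {α T : Type u} {ℵ : Cardinal.{u}} (hℵ : ℵ₀ ≤ ℵ)
    (hT : #T ≤ ℵ) {good : Set α → Prop}
    (hgood : ∀ {ι : Type u} (S : ι → Set α), Directed (· ⊆ ·) S → (∀ i, good (S i)) →
      good (⋃ i, S i))
    {done : T → Set α → Prop} (hdone : ∀ t, Monotone (done t)) (n : ℕ)
    (hstep : ∀ t P, good P → #P < ℵ → ∃ N : Set α, #N ≤ n ∧ good (N ∪ P) ∧ done t (N ∪ P)) :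
    ∃ P, good P ∧ ∀ t, done t P := by
  classical
  obtain ⟨_, _, hord⟩ := exists_ord_eq_type_lt T
  have hstep' : ∀ t P, ∃ N : Set α, #N ≤ n ∧
      (good P → #P < ℵ → good (N ∪ P) ∧ done t (N ∪ P)) := by
    intro t P
    by_cases h : good P ∧ #P < ℵ
    · obtain ⟨N, hN, hgN, hdN⟩ := hstep t P h.1 h.2
      exact ⟨N, hN, fun _ _ => ⟨hgN, hdN⟩⟩
    · exact ⟨∅, by simp, fun h₁ h₂ => (h ⟨h₁, h₂⟩).elim⟩
  choose N hNcard hN using hstep'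
  -- bounding each stage by `n`, not just by a cardinal `< ℵ`, keeps every initial part of the
  -- construction below `ℵ` even when `ℵ` is singular
  let g : T → Set α := wellFounded_lt.fix fun t g' => N t (⋃ s : Iio t, g' s s.2)
  let pre : T → Set α := fun t => ⋃ s : Iio t, g s
  let Q : T → Set α := fun t => g t ∪ pre t
  have hg : ∀ t, g t = N t (pre t) := wellFounded_lt.fix_eq _
  have hpre_card : ∀ t, #(pre t) < ℵ := fun t =>
    calc #(pre t) ≤ Cardinal.sum fun s : Iio t => #(g s) := mk_iUnion_le_sum_mk
      _ ≤ Cardinal.sum fun _ : Iio t => (n : Cardinal) :=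
        Cardinal.sum_le_sum _ _ fun s => (hg s).symm ▸ hNcard _ _
      _ = #(Iio t) * n := sum_const' _ _
      _ < ℵ := mul_lt_of_lt hℵ ((mk_Iio_lt t hord).trans_le hT) (natCast_lt_aleph0.trans_le hℵ)
  have hQ_pre : ∀ {s t}, s < t → Q s ⊆ pre t := fun hst =>
    union_subset (subset_iUnion_of_subset ⟨_, hst⟩ subset_rfl)
      (iUnion_subset fun r => subset_iUnion_of_subset ⟨r, r.2.trans hst⟩ subset_rfl)
  have hQ_mono : Monotone Q := fun s t hst => hst.lt_or_eq.elim
    (fun h => (hQ_pre h).trans subset_union_right) fun h => h ▸ subset_rfl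
  have hpre_eq : ∀ t, pre t = ⋃ s : Iio t, Q s := fun t =>
    (iUnion_mono fun _ => subset_union_left).antisymm (iUnion_subset fun s => hQ_pre s.2)
  have hQ : ∀ t, good (Q t) ∧ done t (Q t) := by
    intro t
    induction t using WellFoundedLT.induction with | ind t ih
    have hpre : good (pre t) := hpre_eq t ▸ hgood _
      ((hQ_mono.comp (Subtype.mono_coe _)).directed_le) fun s => (ih s s.2).1
    simpa only [Q, hg t] using hN t (pre t) hpre (hpre_card t)
  exact ⟨⋃ t, Q t, hgood Q hQ_mono.directed_le fun t => (hQ t).1,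
    fun t => hdone t (subset_iUnion Q t) (hQ t).2⟩

section PartialFactorization

variable {A X : Type u} {V : A → Type u} {F : ∀ a, SimpleGraph (V a)} {R : SimpleGraph X}
  {P Q : Set (Σ a, V a × X)}

variable (F) in
/-- An atom `⟨a, (u, x)⟩` of `P` places the vertex `u` of `F a` at the vertex `x`, so a set of
atoms describes partial copies of all the graphs `F a` in `X` at once. -/
def Covers (P : Set (Σ a, V a × X)) (a : A) (x y : X) : Prop :=
  ∃ u v, ⟨a, (u, x)⟩ ∈ P ∧ ⟨a, (v, y)⟩ ∈ P ∧ (F a).Adj u v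

variable (F R) in
structure IsPartialFactorization (P : Set (Σ a, V a × X)) : Prop where
  functional {a u x y} : ⟨a, (u, x)⟩ ∈ P → ⟨a, (u, y)⟩ ∈ P → x = y
  injective {a u v x} : ⟨a, (u, x)⟩ ∈ P → ⟨a, (v, x)⟩ ∈ P → u = v
  map_adj {a u v x y} : ⟨a, (u, x)⟩ ∈ P → ⟨a, (v, y)⟩ ∈ P → (F a).Adj u v → R.Adj x y
  covers_unique {a b x y} : Covers F P a x y → Covers F P b x y → a = b

theorem Covers.mono (h : P ⊆ Q) {a : A} {x y : X} : Covers F P a x y → Covers F Q a x y :=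
  fun ⟨u, v, hu, hv, huv⟩ => ⟨u, v, h hu, h hv, huv⟩

theorem Covers.symm {a : A} {x y : X} : Covers F P a x y → Covers F P a y x :=
  fun ⟨u, v, hu, hv, huv⟩ => ⟨v, u, hv, hu, huv.symm⟩

theorem sigma_mk_mem_insert_iff {a : A} {u v : V a} {x y : X} :
    (⟨a, (v, y)⟩ : Σ a, V a × X) ∈ insert ⟨a, (u, x)⟩ P ↔ v = u ∧ y = x ∨ ⟨a, (v, y)⟩ ∈ P := by
  simp

theorem sigma_mk_mem_insert_of_ne {a b : A} (hba : b ≠ a) {u : V a} {v : V b} {x y : X} :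
    (⟨b, (v, y)⟩ : Σ a, V a × X) ∈ insert ⟨a, (u, x)⟩ P ↔ ⟨b, (v, y)⟩ ∈ P := by
  simp [hba]

theorem Covers.of_insert {a b : A} {u : V a} {x x' y' : X}
    (h : Covers F (insert ⟨a, (u, x)⟩ P) b x' y') :
    Covers F P b x' y' ∨ b = a ∧ ∃ v y, ⟨a, (v, y)⟩ ∈ P ∧ (F a).Adj u v ∧
      (x' = x ∧ y' = y ∨ x' = y ∧ y' = x) := by
  obtain ⟨u₁, v₁, h₁, h₂, hadj⟩ := h
  by_cases hba : b = a
  · subst hba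
    rw [sigma_mk_mem_insert_iff] at h₁ h₂
    rcases h₁ with ⟨rfl, rfl⟩ | h₁ <;> rcases h₂ with ⟨rfl, rfl⟩ | h₂
    · exact (hadj.ne rfl).elim
    · exact Or.inr ⟨rfl, v₁, y', h₂, hadj, Or.inl ⟨rfl, rfl⟩⟩
    · exact Or.inr ⟨rfl, u₁, x', h₁, hadj.symm, Or.inr ⟨rfl, rfl⟩⟩
    · exact Or.inl ⟨u₁, v₁, h₁, h₂, hadj⟩
  · rw [sigma_mk_mem_insert_of_ne hba] at h₁ h₂
    exact Or.inl ⟨u₁, v₁, h₁, h₂, hadj⟩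

namespace IsPartialFactorization

theorem insert_of_fresh (hP : IsPartialFactorization F R P) {a : A} {u : V a} {x : X}
    (hu : ∀ y, ⟨a, (u, y)⟩ ∉ P) (hx : ∀ v, ⟨a, (v, x)⟩ ∉ P)
    (hnew : ∀ v y, ⟨a, (v, y)⟩ ∈ P → (F a).Adj u v → R.Adj x y ∧ ∀ b, ¬ Covers F P b x y) :
    IsPartialFactorization F R (insert ⟨a, (u, x)⟩ P) where
  functional {b v y z} h h' := by
    by_cases hba : b = a
    · subst hba
      rw [sigma_mk_mem_insert_iff] at h h'
      grind [hP.functional]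
    · rw [sigma_mk_mem_insert_of_ne hba] at h h'
      exact hP.functional h h'
  injective {b v w y} h h' := by
    by_cases hba : b = a
    · subst hba
      rw [sigma_mk_mem_insert_iff] at h h'
      grind [hP.injective]
    · rw [sigma_mk_mem_insert_of_ne hba] at h h'
      exact hP.injective h h'
  map_adj {b v w y z} h h' hadj := by
    by_cases hba : b = a
    · subst hba
      rw [sigma_mk_mem_insert_iff] at h h'
      rcases h with ⟨rfl, rfl⟩ | h <;> rcases h' with ⟨rfl, rfl⟩ | h'
      exacts [(hadj.ne rfl).elim, (hnew _ _ h' hadj).1, (hnew _ _ h hadj.symm).1.symm,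
        hP.map_adj h h' hadj]
    · rw [sigma_mk_mem_insert_of_ne hba] at h h'
      exact hP.map_adj h h' hadj
  covers_unique {b c y z} hb hc := by
    have fresh : ∀ {d}, Covers F P d y z → ∀ v w, ⟨a, (v, w)⟩ ∈ P → (F a).Adj u v →
        ¬ (y = x ∧ z = w ∨ y = w ∧ z = x) := by
      rintro d hd v w hv huv (⟨rfl, rfl⟩ | ⟨rfl, rfl⟩)
      exacts [(hnew v z hv huv).2 d hd, (hnew v y hv huv).2 d hd.symm]
    rcases hb.of_insert with hb' | ⟨rfl, v, w, hv, huv, hyz⟩ <;>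
      rcases hc.of_insert with hc' | ⟨rfl, v', w', hv', huv', hyz'⟩
    exacts [hP.covers_unique hb' hc', (fresh hb' v' w' hv' huv' hyz').elim,
      (fresh hc' v w hv huv hyz).elim, rfl]

theorem iUnion {ι : Type*} {S : ι → Set (Σ a, V a × X)} (hS : Directed (· ⊆ ·) S)
    (h : ∀ i, IsPartialFactorization F R (S i)) : IsPartialFactorization F R (⋃ i, S i) := by
  have mem₂ : ∀ {p q}, p ∈ ⋃ i, S i → q ∈ ⋃ i, S i → ∃ k, p ∈ S k ∧ q ∈ S k := by
    intro p q hp hq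
    obtain ⟨i, hi⟩ := mem_iUnion.1 hp
    obtain ⟨j, hj⟩ := mem_iUnion.1 hq
    obtain ⟨k, hik, hjk⟩ := hS i j
    exact ⟨k, hik hi, hjk hj⟩
  have covers : ∀ {a x y}, Covers F (⋃ i, S i) a x y → ∃ k, Covers F (S k) a x y :=
    fun ⟨u, v, hu, hv, huv⟩ => (mem₂ hu hv).imp fun k hk => ⟨u, v, hk.1, hk.2, huv⟩
  refine ⟨fun hu hv => ?_, fun hu hv => ?_, fun hu hv huv => ?_, fun hb hc => ?_⟩
  · obtain ⟨k, hu, hv⟩ := mem₂ hu hv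
    exact (h k).functional hu hv
  · obtain ⟨k, hu, hv⟩ := mem₂ hu hv
    exact (h k).injective hu hv
  · obtain ⟨k, hu, hv⟩ := mem₂ hu hv
    exact (h k).map_adj hu hv huv
  · obtain ⟨i, hb⟩ := covers hb
    obtain ⟨j, hc⟩ := covers hc
    obtain ⟨k, hik, hjk⟩ := hS i j
    exact (h k).covers_unique (hb.mono hik) (hc.mono hjk)

theorem exists_insert_image {ℵ : Cardinal.{u}} (hℵ : ℵ₀ ≤ ℵ) (hR : StarProp ℵ R)
    (hP : IsPartialFactorization F R P) (hcard : #P < ℵ) {a : A} {u : V a}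
    (hu : ∀ y, ⟨a, (u, y)⟩ ∉ P) : ∃ x, IsPartialFactorization F R (insert ⟨a, (u, x)⟩ P) := by
  set used : Set X := (fun p : Σ a, V a × X => p.2.2) '' P
  have hused : #used < ℵ := mk_image_le.trans_lt hcard
  set nbrs : Set X := {y | ∃ v, ⟨a, (v, y)⟩ ∈ P ∧ (F a).Adj u v}
  have hnbrs_used : nbrs ⊆ used := fun _ ⟨_, hv, _⟩ => mem_image_of_mem _ hv
  have hnbrs : #nbrs < ℵ := (mk_le_mk_of_subset hnbrs_used).trans_lt hused
  obtain ⟨x, hx, hxnbrs, -⟩ := hR.exists_adj_not_adj_not_mem hℵ (W := ∅) disjoint_bot_right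
    hnbrs ((mk_eq_zero _).trans_lt (aleph0_pos.trans_le hℵ)) hused
  refine ⟨x, hP.insert_of_fresh hu (fun v hv => hx ⟨_, hv, rfl⟩) fun v y hv huv =>
    ⟨hxnbrs y ⟨v, hv, huv⟩, ?_⟩⟩
  rintro b ⟨w, -, hw, -, -⟩
  exact hx ⟨_, hw, rfl⟩

theorem exists_insert_preimage {ℵ : Cardinal.{u}} {a : A}
    (hdom : ∀ D, IsDominatingSet (F a) D → ℵ ≤ #D) (hP : IsPartialFactorization F R P)
    (hcard : #P < ℵ) {x : X} (hx : ∀ v, ⟨a, (v, x)⟩ ∉ P) :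
    ∃ u, IsPartialFactorization F R (insert ⟨a, (u, x)⟩ P) := by
  set D : Set (V a) := Prod.fst '' (Sigma.mk (β := fun a => V a × X) a ⁻¹' P)
  have hD : #D < ℵ :=
    (mk_image_le.trans (mk_preimage_of_injective _ _ sigma_mk_injective)).trans_lt hcard
  obtain ⟨u, huD, hu⟩ : ∃ u ∉ D, ∀ d ∈ D, ¬ (F a).Adj u d := by
    simpa [IsDominatingSet] using mt (hdom D) (not_le.2 hD)
  exact ⟨u, hP.insert_of_fresh (fun y hy => huD ⟨(u, y), hy, rfl⟩) hx
    fun v y hv huv => hu v ⟨(v, y), hv, rfl⟩ huv |>.elim⟩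

theorem insert_insert_edge (hP : IsPartialFactorization F R P) {a : A}
    (ha : ∀ w z, ⟨a, (w, z)⟩ ∉ P) {u v : V a} (huv : (F a).Adj u v) {x y : X}
    (hxy : R.Adj x y) (hnc : ∀ b, ¬ Covers F P b x y) :
    IsPartialFactorization F R (insert ⟨a, (v, y)⟩ (insert ⟨a, (u, x)⟩ P)) := by
  refine (hP.insert_of_fresh (ha u) (fun w => ha w x) fun w z h => (ha w z h).elim).insert_of_fresh ?_ ?_ ?_
  · intro z h
    rw [sigma_mk_mem_insert_iff] at h
    rcases h with ⟨rfl, -⟩ | h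
    exacts [huv.ne rfl, ha _ _ h]
  · intro w h
    rw [sigma_mk_mem_insert_iff] at h
    rcases h with ⟨-, rfl⟩ | h
    exacts [hxy.ne rfl, ha _ _ h]
  · intro w z h hvw
    rw [sigma_mk_mem_insert_iff] at h
    rcases h with ⟨rfl, rfl⟩ | h
    · refine ⟨hxy.symm, fun b hb => ?_⟩
      rcases hb.of_insert with hb | ⟨-, w', z', h', -⟩
      exacts [hnc b hb.symm, ha _ _ h']
    · exact (ha _ _ h).elim

theorem exists_equiv (hP : IsPartialFactorization F R P) {a : A}
    (hdom : ∀ u, ∃ x, ⟨a, (u, x)⟩ ∈ P) (hran : ∀ x, ∃ u, ⟨a, (u, x)⟩ ∈ P) :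
    ∃ e : V a ≃ X, ∀ u x, ⟨a, (u, x)⟩ ∈ P ↔ e u = x := by
  choose f hf using hdom
  have hf_bij : Function.Bijective f :=
    ⟨fun u v h => hP.injective (hf u) (h ▸ hf v),
      fun x => (hran x).imp fun u hu => hP.functional (hf u) hu⟩
  exact ⟨.ofBijective f hf_bij, fun u x => ⟨hP.functional (hf u), fun h => h ▸ hf u⟩⟩

theorem exists_factorization (hP : IsPartialFactorization F R P)
    (hdom : ∀ a u, ∃ x, ⟨a, (u, x)⟩ ∈ P) (hran : ∀ a x, ∃ u, ⟨a, (u, x)⟩ ∈ P)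
    (hcov : ∀ x y, R.Adj x y → ∃ b, Covers F P b x y) :
    ∃ G : A → SimpleGraph X, IsFactorization R G ∧ ∀ a, Nonempty (F a ≃g G a) := by
  choose e he using fun a => hP.exists_equiv (hdom a) (hran a)
  have covers_iff : ∀ a x y, Covers F P a x y ↔ ((F a).map (e a).toEmbedding).Adj x y := by
    intro a x y
    rw [SimpleGraph.map_adj]
    simp only [Covers, he, Equiv.coe_toEmbedding]
    grind
  refine ⟨fun a => (F a).map (e a).toEmbedding, ⟨fun a x y h => ?_, fun s hs => ?_⟩,
    fun a => ⟨Iso.map (e a) (F a)⟩⟩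
  · obtain ⟨u, v, hu, hv, huv⟩ := (covers_iff a x y).2 h
    exact hP.map_adj hu hv huv
  · induction s using Sym2.ind with | h x y => ?_
    obtain ⟨b, hb⟩ := hcov x y hs
    exact ⟨b, (covers_iff b x y).1 hb, fun c hc => hP.covers_unique ((covers_iff c x y).2 hc) hb⟩

end IsPartialFactorization

end PartialFactorization

section Requirements

variable {A X : Type u} {V : A → Type u} {F : ∀ a, SimpleGraph (V a)} {R : SimpleGraph X}

variable (F R) in
def RequirementMet : (Σ a, V a) ⊕ (A × X) ⊕ (X × X) → Set (Σ a, V a × X) → Prop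
  | .inl ⟨a, u⟩, P => ∃ x, ⟨a, (u, x)⟩ ∈ P
  | .inr (.inl (a, x)), P => ∃ u, ⟨a, (u, x)⟩ ∈ P
  | .inr (.inr (x, y)), P => R.Adj x y → ∃ b, Covers F P b x y

theorem requirementMet_mono (t : (Σ a, V a) ⊕ (A × X) ⊕ (X × X)) :
    Monotone (RequirementMet F R t) := by
  rcases t with ⟨a, u⟩ | ⟨a, x⟩ | ⟨x, y⟩ <;> intro P Q hPQ
  · exact fun ⟨x, hx⟩ => ⟨x, hPQ hx⟩
  · exact fun ⟨u, hu⟩ => ⟨u, hPQ hu⟩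
  · exact fun h hxy => (h hxy).imp fun b hb => hb.mono hPQ

theorem mk_requirements_le {ℵ : Cardinal.{u}} (hℵ : ℵ₀ ≤ ℵ) (hX : #X = ℵ) (hA : #A = ℵ)
    (hV : ∀ a, #(V a) = ℵ) : #((Σ a, V a) ⊕ (A × X) ⊕ (X × X)) ≤ ℵ := by
  simp [hX, hA, hV, mul_eq_self hℵ, add_eq_self hℵ]

theorem IsPartialFactorization.exists_union_requirementMet {ℵ : Cardinal.{u}} (hℵ : ℵ₀ ≤ ℵ)
    (hR : StarProp ℵ R) (hA : #A = ℵ)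
    (hdom : ∀ a (D : Set (V a)), IsDominatingSet (F a) D → ℵ ≤ #D)
    (hne : ∀ a, (F a).edgeSet.Nonempty) {P : Set (Σ a, V a × X)}
    (hP : IsPartialFactorization F R P) (hcard : #P < ℵ)
    (t : (Σ a, V a) ⊕ (A × X) ⊕ (X × X)) :
    ∃ N : Set (Σ a, V a × X), #N ≤ 2 ∧ IsPartialFactorization F R (N ∪ P) ∧
      RequirementMet F R t (N ∪ P) := by
  by_cases hmet : RequirementMet F R t P
  · exact ⟨∅, by simp, by rwa [empty_union], by rwa [empty_union]⟩
  rcases t with ⟨a, u⟩ | ⟨a, x⟩ | ⟨x, y⟩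
  · obtain ⟨x, hx⟩ := hP.exists_insert_image hℵ hR hcard (not_exists.1 hmet)
    exact ⟨{⟨a, (u, x)⟩}, by simp, by rwa [singleton_union], x, by simp⟩
  · obtain ⟨u, hu⟩ := hP.exists_insert_preimage (hdom a) hcard (not_exists.1 hmet)
    exact ⟨{⟨a, (u, x)⟩}, by simp, by rwa [singleton_union], u, by simp⟩
  · obtain ⟨hxy, hnc⟩ : R.Adj x y ∧ ∀ b, ¬ Covers F P b x y := by
      simpa [RequirementMet] using hmet
    obtain ⟨a, ha⟩ : ∃ a, ∀ w z, ⟨a, (w, z)⟩ ∉ P := by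
      have : #(Sigma.fst '' P) < #A := hA ▸ mk_image_le.trans_lt hcard
      obtain ⟨a, ha⟩ := compl_nonempty_of_mk_lt_mk this
      exact ⟨a, fun w z h => ha ⟨_, h, rfl⟩⟩
    obtain ⟨u, v, huv⟩ := ne_bot_iff_exists_adj.1 (edgeSet_nonempty.1 (hne a))
    refine ⟨{⟨a, (v, y)⟩, ⟨a, (u, x)⟩}, ?_, ?_, fun _ => ⟨a, u, v, by simp, by simp, huv⟩⟩
    · exact mk_insert_le.trans (by simp [one_add_one_eq_two])
    · rw [insert_union, singleton_union]
      exact hP.insert_insert_edge ha huv hxy hnc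

end Requirements

theorem stmt_9_general
    (ℵ : Cardinal.{u}) (hℵ : Cardinal.aleph0 ≤ ℵ)
    {X : Type u} (hX : Cardinal.mk X = ℵ)
    (Rℵ : SimpleGraph X) (hR : StarProp ℵ Rℵ)
    {A : Type u} (hA : Cardinal.mk A = ℵ)
    (V : A → Type u) (hV : ∀ a, Cardinal.mk (V a) = ℵ)
    (F : ∀ a, SimpleGraph (V a)) (hne : ∀ a, (F a).edgeSet.Nonempty) :
    (∃ G : A → SimpleGraph X, IsFactorization Rℵ G ∧ ∀ a, Nonempty (F a ≃g G a)) ↔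
      ∀ a (D : Set (V a)), IsDominatingSet (F a) D → ℵ ≤ Cardinal.mk ↥D := by
  constructor
  · rintro ⟨G, ⟨hle, -⟩, hiso⟩ a D hD
    exact (hR.le_mk_of_isDominatingSet hℵ (hle a) (hD.image_iso (hiso a).some)).trans mk_image_le
  · intro hdom
    obtain ⟨P, hP, hmet⟩ := exists_forall_of_small_extensions hℵ (mk_requirements_le hℵ hX hA hV)
      (fun S hS h => IsPartialFactorization.iUnion hS h) requirementMet_mono 2
      fun t P hP hcard => hP.exists_union_requirementMet hℵ hR hA hdom hne hcard t
    exact hP.exists_factorization (fun a u => hmet (.inl ⟨a, u⟩))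
      (fun a x => hmet (.inr (.inl (a, x)))) fun x y => hmet (.inr (.inr (x, y)))

/-- assume GCH. Let `Rℵ` be a graph of infinite order `ℵ` satisfying
property `⋆_ℵ` (an `ℵ`-Rado graph) and let `𝓕` be a family of (non-empty) graphs
of order `ℵ` with `|𝓕| = ℵ`. Then `FP(𝓕, Rℵ)` has a solution iff the domination
number of every graph of `𝓕` equals `ℵ` (no dominating set of cardinality `< ℵ`). -/
theorem stmt_9
    (gch : ∀ c : Cardinal.{u}, Cardinal.aleph0 ≤ c → ¬∃ d : Cardinal.{u}, c < d ∧ d < 2 ^ c)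
    (ℵ : Cardinal.{u}) (hℵ : Cardinal.aleph0 ≤ ℵ)
    {X : Type u} (hX : Cardinal.mk X = ℵ)
    (Rℵ : SimpleGraph X) (hR : StarProp ℵ Rℵ)
    {A : Type u} (hA : Cardinal.mk A = ℵ)
    (V : A → Type u) (hV : ∀ a, Cardinal.mk (V a) = ℵ)
    (F : ∀ a, SimpleGraph (V a)) (hne : ∀ a, (F a).edgeSet.Nonempty) :
    (∃ G : A → SimpleGraph X, IsFactorization Rℵ G ∧ ∀ a, Nonempty (F a ≃g G a)) ↔
      ∀ a (D : Set (V a)), IsDominatingSet (F a) D → ℵ ≤ Cardinal.mk ↥D :=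
  stmt_9_general ℵ hℵ hX Rℵ hR hA V hV F hne
end
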